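/- arXiv:0908.1298 — 5 statements merged into one kernel-verified Lean document; each statement's English description precedes it below -/
import Mathlib

section
/- For all integers k ≥ 1 and M ≥ 1, T^{(M)}(x), defined by the recursion T^{(1)}(x) = 0 and T^{(M)}(x) = T^{(M−1)}(x) + x_M · Σ_{v ∈ U^{M−1}} C(k; (1, v_1, …, v_{M−1})) · x_1^{v_1} ⋯ x_{M−1}^{v_{M−1}}, equals the sum of C(k; u) · x_1^{u_1} ⋯ x_M^{u_M} over all vectors u = (u_1, …, u_M) of nonnegative integers with u_1 + … + u_M ≤ k, with Σ_{r odd} u_r even, and for which there exists c ∈ {1, …, M} with u_c = 1, u_r = 0 for all c < r ≤ M, and c > Σ_{r=1}^{c−1} r·u_r. -/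
/-!
Induct on `M`. Split a vector of length `M + 1` as `u = (v, a)` with `a = u_{M+1}`. If its pivot
`c` is `M + 1`, then `a = 1` and the remaining conditions on `u` say exactly that `v ∈ U^M`; if
`c ≤ M`, then `a = 0` and `v` is itself admissible of length `M`. Since `C(k; u)` only depends on
the multiset of entries of `u`, `C(k; (v, 1)) = C(k; (1, v))`; the terms of the recursion with
`∑ v + 1 > k` vanish because their multinomial coefficient is `0`. Hence the admissible sum
satisfies the recursion defining `T^{(M)}`.
-/

open Finset MvPolynomial

/-- The multinomial coefficient `C(k; u) = k! / ((k - ∑ u_r)! ∏ u_r!)`,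
taken to be `0` when `∑ u_r > k`.  Index `r : Fin N` represents coordinate `r+1`. -/
def multCoeff (k : ℕ) {N : ℕ} (u : Fin N → ℕ) : ℕ :=
  if ∑ r, u r ≤ k then
    Nat.factorial k / (Nat.factorial (k - ∑ r, u r) * ∏ r, Nat.factorial (u r))
  else 0

/-- `Ufin m` is the set `U^m` of nonnegative integer vectors `v = (v_1, …, v_m)`
(with `M = m + 1`) satisfying `∑_{r=1}^{m} r v_r < m + 1` and
`∑_{r odd} v_r + (m+1)` even.  (Each `v_r ≤ m` automatically.) -/
def Ufin (m : ℕ) : Finset (Fin m → ℕ) :=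
  (Fintype.piFinset fun _ : Fin m => Finset.range (m + 1)) |>.filter
    (fun v : Fin m → ℕ => (∑ r : Fin m, ((r : ℕ) + 1) * v r) < m + 1 ∧
      Even ((∑ r ∈ Finset.univ.filter (fun r : Fin m => Odd ((r : ℕ) + 1)), v r) + (m + 1)))

/-- `Tpoly k M` is `T^{(M)}(x)`, defined by the recursion `T^{(1)}(x) = 0` and
`T^{(M)}(x) = T^{(M-1)}(x) + x_M ∑_{v ∈ U^{M-1}} C(k; (1, v_1, …, v_{M-1}))
x_1^{v_1} ⋯ x_{M-1}^{v_{M-1}}`.  Variable `x_r` is represented by `X (r - 1)`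
in `MvPolynomial ℕ ℝ`. -/
noncomputable def Tpoly (k : ℕ) : ℕ → MvPolynomial ℕ ℝ
  | 0 => 0
  | 1 => 0
  | (m + 2) =>
      Tpoly k (m + 1) +
        MvPolynomial.X (m + 1) *
          ∑ v ∈ Ufin (m + 1),
            MvPolynomial.C (multCoeff k (Fin.cons 1 v) : ℝ) *
              ∏ r : Fin (m + 1), MvPolynomial.X (r : ℕ) ^ v r

theorem Finset.sum_eq_sum_snoc_add_sum_snoc {α β : Type*} [AddCommMonoid β] {n : ℕ}
    {s : Finset (Fin (n + 1) → α)} {t₀ t₁ : Finset (Fin n → α)} {a₀ a₁ : α} (h : a₀ ≠ a₁)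
    (hs : ∀ v a, (Fin.snoc v a : Fin (n + 1) → α) ∈ s ↔ a = a₀ ∧ v ∈ t₀ ∨ a = a₁ ∧ v ∈ t₁)
    (f : (Fin (n + 1) → α) → β) :
    ∑ u ∈ s, f u = ∑ v ∈ t₀, f (Fin.snoc v a₀) + ∑ v ∈ t₁, f (Fin.snoc v a₁) := by
  let e (a : α) : (Fin n → α) ↪ (Fin (n + 1) → α) :=
    ⟨(Fin.snoc · a), Fin.snoc_left_injective (α := fun _ => α) a⟩
  have hdisj : Disjoint (t₀.map (e a₀)) (t₁.map (e a₁)) := by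
    simp [e, disjoint_left, h.symm]
  have hsplit : s = (t₀.map (e a₀)).disjUnion (t₁.map (e a₁)) hdisj := by
    ext u
    induction u using Fin.snocCases with
    | snoc v a => simp [e, hs, eq_comm, and_comm]
  rw [hsplit, sum_disjUnion, sum_map, sum_map]
  rfl

section MultCoeff

theorem multCoeff_congr (k : ℕ) {N N' : ℕ} {u : Fin N → ℕ} {w : Fin N' → ℕ}
    (hsum : ∑ r, u r = ∑ r, w r) (hprod : ∏ r, (u r).factorial = ∏ r, (w r).factorial) :
    multCoeff k u = multCoeff k w := by
  simp only [multCoeff, hsum, hprod]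

theorem multCoeff_of_lt {k N : ℕ} {u : Fin N → ℕ} (h : k < ∑ r, u r) : multCoeff k u = 0 :=
  if_neg h.not_ge

theorem multCoeff_snoc_zero (k : ℕ) {n : ℕ} (v : Fin n → ℕ) :
    multCoeff k (Fin.snoc v 0 : Fin (n + 1) → ℕ) = multCoeff k v :=
  multCoeff_congr k (by simp) (by simp [Fin.prod_univ_castSucc])

theorem multCoeff_snoc_one (k : ℕ) {n : ℕ} (v : Fin n → ℕ) :
    multCoeff k (Fin.snoc v 1 : Fin (n + 1) → ℕ) = multCoeff k (Fin.cons 1 v : Fin (n + 1) → ℕ) :=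
  multCoeff_congr k (by simp [add_comm])
    (by rw [Fin.prod_univ_castSucc, Fin.prod_univ_succ]; simp [mul_comm])

end MultCoeff

section Term

variable {R : Type*} [CommSemiring R]

noncomputable def multinomialTerm (k : ℕ) {N : ℕ} (u : Fin N → ℕ) : MvPolynomial ℕ R :=
  C (multCoeff k u : R) * ∏ r : Fin N, X (r : ℕ) ^ u r

theorem multinomialTerm_snoc_zero (k : ℕ) {n : ℕ} (v : Fin n → ℕ) :
    (multinomialTerm k (Fin.snoc v 0 : Fin (n + 1) → ℕ) : MvPolynomial ℕ R) =
      multinomialTerm k v := by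
  simp [multinomialTerm, multCoeff_snoc_zero, Fin.prod_univ_castSucc]

theorem multinomialTerm_snoc_one (k : ℕ) {n : ℕ} (v : Fin n → ℕ) :
    (multinomialTerm k (Fin.snoc v 1 : Fin (n + 1) → ℕ) : MvPolynomial ℕ R) =
      X n * (C (multCoeff k (Fin.cons 1 v : Fin (n + 1) → ℕ) : R) *
        ∏ r : Fin n, X (r : ℕ) ^ v r) := by
  simp only [multinomialTerm, multCoeff_snoc_one, Fin.prod_univ_castSucc, Fin.snoc_castSucc,
    Fin.snoc_last, Fin.val_castSucc, Fin.val_last, pow_one]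
  ring

end Term

section Pivot

variable {N n : ℕ}

def oddIndexSum (u : Fin N → ℕ) : ℕ :=
  ∑ r ∈ univ.filter (fun r : Fin N => Odd ((r : ℕ) + 1)), u r

def weightedSum (u : Fin N → ℕ) : ℕ :=
  ∑ r : Fin N, ((r : ℕ) + 1) * u r

def weightedSumBelow (u : Fin N → ℕ) (c : Fin N) : ℕ :=
  ∑ r ∈ univ.filter (fun r : Fin N => r < c), ((r : ℕ) + 1) * u r

def IsPivot (u : Fin N → ℕ) (c : Fin N) : Prop :=
  u c = 1 ∧ (∀ r, c < r → u r = 0) ∧ weightedSumBelow u c < (c : ℕ) + 1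

theorem oddIndexSum_snoc (v : Fin n → ℕ) (a : ℕ) :
    oddIndexSum (Fin.snoc v a : Fin (n + 1) → ℕ) =
      oddIndexSum v + if Odd (n + 1) then a else 0 := by
  simp [oddIndexSum, sum_filter, Fin.sum_univ_castSucc]

theorem weightedSumBelow_snoc_castSucc (v : Fin n → ℕ) (a : ℕ) (c : Fin n) :
    weightedSumBelow (Fin.snoc v a : Fin (n + 1) → ℕ) c.castSucc = weightedSumBelow v c := by
  simp [weightedSumBelow, sum_filter, Fin.sum_univ_castSucc, (Fin.castSucc_lt_last c).not_gt]

theorem weightedSumBelow_snoc_last (v : Fin n → ℕ) (a : ℕ) :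
    weightedSumBelow (Fin.snoc v a : Fin (n + 1) → ℕ) (Fin.last n) = weightedSum v := by
  simp [weightedSumBelow, weightedSum, sum_filter, Fin.sum_univ_castSucc, Fin.castSucc_lt_last]

theorem isPivot_snoc_last_iff (v : Fin n → ℕ) (a : ℕ) :
    IsPivot (Fin.snoc v a : Fin (n + 1) → ℕ) (Fin.last n) ↔ a = 1 ∧ weightedSum v < n + 1 := by
  simp [IsPivot, weightedSumBelow_snoc_last, fun r => (Fin.le_last r).not_gt]

theorem isPivot_snoc_castSucc_iff (v : Fin n → ℕ) (a : ℕ) (c : Fin n) :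
    IsPivot (Fin.snoc v a : Fin (n + 1) → ℕ) c.castSucc ↔ a = 0 ∧ IsPivot v c := by
  simp only [IsPivot, weightedSumBelow_snoc_castSucc, Fin.forall_fin_succ', Fin.snoc_castSucc,
    Fin.snoc_last, Fin.castSucc_lt_castSucc_iff, Fin.castSucc_lt_last, Fin.val_castSucc]
  tauto

theorem exists_isPivot_snoc_iff (v : Fin n → ℕ) (a : ℕ) :
    (∃ c, IsPivot (Fin.snoc v a : Fin (n + 1) → ℕ) c) ↔
      a = 1 ∧ weightedSum v < n + 1 ∨ a = 0 ∧ ∃ c, IsPivot v c := by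
  simp only [Fin.exists_fin_succ', isPivot_snoc_castSucc_iff, isPivot_snoc_last_iff,
    exists_and_left]
  tauto

end Pivot

-- Spelled out as in the theorem rather than through `IsPivot`, so that the theorem's sum is
-- `admissibleSet` up to `change`, with the same decidability instances.
def admissibleSet (k M : ℕ) : Finset (Fin M → ℕ) :=
  (Fintype.piFinset fun _ : Fin M => Finset.range (k + 1)) |>.filter
    (fun u : Fin M → ℕ => ∑ r, u r ≤ k ∧
      Even (∑ r ∈ Finset.univ.filter (fun r : Fin M => Odd ((r : ℕ) + 1)), u r) ∧
      ∃ c : Fin M, u c = 1 ∧ (∀ r : Fin M, c < r → u r = 0) ∧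
        (∑ r ∈ Finset.univ.filter (fun r : Fin M => r < c), ((r : ℕ) + 1) * u r) < (c : ℕ) + 1)

theorem mem_admissibleSet {k M : ℕ} {u : Fin M → ℕ} :
    u ∈ admissibleSet k M ↔ ∑ r, u r ≤ k ∧ Even (oddIndexSum u) ∧ ∃ c, IsPivot u c := by
  rw [admissibleSet, mem_filter, Fintype.mem_piFinset]
  refine and_iff_right_of_imp fun h r => mem_range.2 (Nat.lt_succ_of_le ?_)
  exact (single_le_sum (fun _ _ => Nat.zero_le _) (mem_univ r)).trans h.1

theorem mem_Ufin {n : ℕ} {v : Fin n → ℕ} :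
    v ∈ Ufin n ↔ weightedSum v < n + 1 ∧ Even (oddIndexSum v + (n + 1)) := by
  rw [Ufin, mem_filter, Fintype.mem_piFinset]
  refine and_iff_right_of_imp fun h r => mem_range.2 ?_
  calc v r ≤ ((r : ℕ) + 1) * v r := Nat.le_mul_of_pos_left _ r.val.succ_pos
    _ ≤ weightedSum v := single_le_sum (f := fun r : Fin n => ((r : ℕ) + 1) * v r)
          (fun _ _ => Nat.zero_le _) (mem_univ r)
    _ < n + 1 := h.1

theorem snoc_mem_admissibleSet_iff (k : ℕ) {n : ℕ} (v : Fin n → ℕ) (a : ℕ) :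
    (Fin.snoc v a : Fin (n + 1) → ℕ) ∈ admissibleSet k (n + 1) ↔
      a = 0 ∧ v ∈ admissibleSet k n ∨
        a = 1 ∧ v ∈ (Ufin n).filter (fun v => ∑ r, v r + 1 ≤ k) := by
  rw [mem_admissibleSet, exists_isPivot_snoc_iff, Fin.sum_snoc, oddIndexSum_snoc, mem_filter,
    mem_Ufin, mem_admissibleSet]
  obtain rfl | rfl | ha : a = 0 ∨ a = 1 ∨ 1 < a := by omega
  · simp
  · have hparity : Even (oddIndexSum v + if Odd (n + 1) then 1 else 0) ↔
        Even (oddIndexSum v + (n + 1)) := by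
      split_ifs with hn
      · simp [Nat.even_add, Nat.not_even_iff_odd.2 hn]
      · simp [Nat.even_add, Nat.not_odd_iff_even.1 hn]
    simp only [hparity]
    tauto
  · simp [ha.ne', (zero_lt_one.trans ha).ne']

theorem admissibleSet_zero (k : ℕ) : admissibleSet k 0 = ∅ := by
  ext u
  simp [mem_admissibleSet]

theorem Ufin_zero : Ufin 0 = ∅ := by
  ext v
  simp [mem_Ufin, oddIndexSum]

theorem sum_multinomialTerm_admissibleSet_succ {R : Type*} [CommSemiring R] (k n : ℕ) :
    ∑ u ∈ admissibleSet k (n + 1), (multinomialTerm k u : MvPolynomial ℕ R) =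
      ∑ u ∈ admissibleSet k n, multinomialTerm k u +
        X n * ∑ v ∈ Ufin n, C (multCoeff k (Fin.cons 1 v : Fin (n + 1) → ℕ) : R) *
          ∏ r : Fin n, X (r : ℕ) ^ v r := by
  rw [sum_eq_sum_snoc_add_sum_snoc zero_ne_one (snoc_mem_admissibleSet_iff k), mul_sum,
    sum_filter_of_ne]
  · simp only [multinomialTerm_snoc_zero, multinomialTerm_snoc_one]
  · intro v _ hv
    by_contra hk
    rw [multinomialTerm_snoc_one, multCoeff_of_lt (by rw [Fin.sum_cons]; omega)] at hv
    simp at hv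

theorem Tpoly_succ (k n : ℕ) :
    Tpoly k (n + 1) = Tpoly k n +
      X n * ∑ v ∈ Ufin n, C (multCoeff k (Fin.cons 1 v : Fin (n + 1) → ℕ) : ℝ) *
        ∏ r : Fin n, X (r : ℕ) ^ v r := by
  cases n with
  | zero => simp [Tpoly, Ufin_zero]
  | succ m => rw [Tpoly]

theorem stmt_1_general (k M : ℕ) :
    Tpoly k M =
      ∑ u ∈ (Fintype.piFinset fun _ : Fin M => Finset.range (k + 1)) |>.filter
          (fun u : Fin M → ℕ => ∑ r, u r ≤ k ∧
            Even (∑ r ∈ Finset.univ.filter (fun r : Fin M => Odd ((r : ℕ) + 1)), u r) ∧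
            ∃ c : Fin M, u c = 1 ∧ (∀ r : Fin M, c < r → u r = 0) ∧
              (∑ r ∈ Finset.univ.filter (fun r : Fin M => r < c), ((r : ℕ) + 1) * u r) < (c : ℕ) + 1),
        MvPolynomial.C (multCoeff k u : ℝ) * ∏ r : Fin M, MvPolynomial.X (r : ℕ) ^ u r := by
  change Tpoly k M = ∑ u ∈ admissibleSet k M, multinomialTerm k u
  induction M with
  | zero => simp [Tpoly, admissibleSet_zero]
  | succ n ih => rw [Tpoly_succ, ih, sum_multinomialTerm_admissibleSet_succ]

/-- For `k, M ≥ 1`, `T^{(M)}(x)` equals the sum of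
`C(k; u) x_1^{u_1} ⋯ x_M^{u_M}` over all nonnegative integer vectors `u` with
`∑ u_r ≤ k`, `∑_{r odd} u_r` even, and for which there exists `c ∈ {1, …, M}`
with `u_c = 1`, `u_r = 0` for `c < r ≤ M`, and `c > ∑_{r=1}^{c-1} r u_r`. -/
theorem stmt_1 (k M : ℕ) (hk : 1 ≤ k) (hM : 1 ≤ M) :
    Tpoly k M =
      ∑ u ∈ (Fintype.piFinset fun _ : Fin M => Finset.range (k + 1)) |>.filter
          (fun u : Fin M → ℕ => ∑ r, u r ≤ k ∧
            Even (∑ r ∈ Finset.univ.filter (fun r : Fin M => Odd ((r : ℕ) + 1)), u r) ∧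
            ∃ c : Fin M, u c = 1 ∧ (∀ r : Fin M, c < r → u r = 0) ∧
              (∑ r ∈ Finset.univ.filter (fun r : Fin M => r < c), ((r : ℕ) + 1) * u r) < (c : ℕ) + 1),
        MvPolynomial.C (multCoeff k u : ℝ) * ∏ r : Fin M, MvPolynomial.X (r : ℕ) ^ u r :=
  stmt_1_general k M
end

section
/- For all integers k ≥ 1 and M ≥ 1, the degree-M pseudoweight enumerating function of the single parity-check code of length k satisfies B^{(M)}(x) = (1/2)[(P^{(M)}(x))^k + (Q^{(M)}(x))^k] − T^{(M)}(x), as an identity of polynomials in x_1, …, x_M. -/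
open Finset MvPolynomial

/-- The set `S` of nonnegative integer vectors `u = (u_1, …, u_M)` satisfying
(S-1) `∑ u_r ≤ k`; (S-2) `∑_{r odd} u_r` even; (S-3) if there is `c` with
`u_c = 1` and `u_r = 0` for `c < r ≤ M`, then `c ≤ ∑_{r=1}^{c-1} r u_r`. -/
def Sset (k M : ℕ) : Finset (Fin M → ℕ) :=
  (Fintype.piFinset fun _ : Fin M => Finset.range (k + 1)) |>.filter
    (fun u : Fin M → ℕ => ∑ r, u r ≤ k ∧
      Even (∑ r ∈ Finset.univ.filter (fun r : Fin M => Odd ((r : ℕ) + 1)), u r) ∧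
      ∀ c : Fin M, (u c = 1 ∧ ∀ r : Fin M, c < r → u r = 0) →
        (c : ℕ) + 1 ≤ ∑ r ∈ Finset.univ.filter (fun r : Fin M => r < c), ((r : ℕ) + 1) * u r)

/-- The degree-`M` pseudoweight enumerating function of the length-`k`
single parity-check code: `B^{(M)}(x) = ∑_{u ∈ S} C(k; u) x_1^{u_1} ⋯ x_M^{u_M}`. -/
noncomputable def Bpoly (k M : ℕ) : MvPolynomial ℕ ℝ :=
  ∑ u ∈ Sset k M, MvPolynomial.C (multCoeff k u : ℝ) * ∏ r : Fin M, MvPolynomial.X (r : ℕ) ^ u r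

/-!
Expanding `P^k` and `Q^k` by the multinomial theorem, the coefficient of `x^u` in `Q^k` is that
of `P^k` times `(-1)^{∑_{r odd} u_r}`, so `(P^k + Q^k)/2` is the sum of `C(k; u) x^u` over the
vectors satisfying (S-1) and (S-2). It remains to see that the vectors among these violating (S-3)
contribute exactly `T`. Such a vector ends in `1, 0, …, 0`, so its last entry is `0` or `1`.
Deleting a last entry `0` gives a violating vector of length `M - 1`; a last entry `1` at position
`M` violates (S-3) iff `∑_{r<M} r u_r < M`, and with the parity of (S-2) shifted by `M` this
says `(u_1, …, u_{M-1}) ∈ U^{M-1}`. This is the recursion defining `T`.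
-/

namespace SingleParityCheck

def oddSum {M : ℕ} (u : Fin M → ℕ) : ℕ :=
  ∑ r ∈ univ.filter (fun r : Fin M => Odd ((r : ℕ) + 1)), u r

def weightSum {M : ℕ} (u : Fin M → ℕ) : ℕ :=
  ∑ r : Fin M, ((r : ℕ) + 1) * u r

def CondS3 {M : ℕ} (u : Fin M → ℕ) : Prop :=
  ∀ c : Fin M, (u c = 1 ∧ ∀ r : Fin M, c < r → u r = 0) →
    (c : ℕ) + 1 ≤ ∑ r ∈ univ.filter (fun r : Fin M => r < c), ((r : ℕ) + 1) * u r

instance {M : ℕ} : DecidablePred (CondS3 (M := M)) := fun _ => by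
  unfold CondS3; infer_instance

def sumLeVecs (k M : ℕ) : Finset (Fin M → ℕ) :=
  (Fintype.piFinset fun _ : Fin M => range (k + 1)).filter (fun u => ∑ r, u r ≤ k)

def evenVecs (k M : ℕ) : Finset (Fin M → ℕ) :=
  (sumLeVecs k M).filter (fun u => Even (oddSum u))

def badVecs (k M : ℕ) : Finset (Fin M → ℕ) :=
  (evenVecs k M).filter (fun u => ¬ CondS3 u)

noncomputable def enumPoly (k : ℕ) {M : ℕ} (s : Finset (Fin M → ℕ)) : MvPolynomial ℕ ℝ :=
  ∑ u ∈ s, C (multCoeff k u : ℝ) * ∏ r : Fin M, X (r : ℕ) ^ u r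

lemma mem_sumLeVecs {k M : ℕ} {u : Fin M → ℕ} : u ∈ sumLeVecs k M ↔ ∑ r, u r ≤ k := by
  refine mem_filter.trans ⟨And.right, fun h => ⟨Fintype.mem_piFinset.2 fun r => ?_, h⟩⟩
  exact mem_range_succ_iff.2 ((single_le_sum (fun _ _ => Nat.zero_le _) (mem_univ r)).trans h)

lemma mem_badVecs {k M : ℕ} {u : Fin M → ℕ} :
    u ∈ badVecs k M ↔ ∑ r, u r ≤ k ∧ Even (oddSum u) ∧ ¬ CondS3 u := by
  simp only [badVecs, evenVecs, mem_filter, mem_sumLeVecs, and_assoc]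

theorem one_add_sum_pow {R : Type*} [CommSemiring R] (k M : ℕ) (a : Fin M → R) :
    (1 + ∑ r, a r) ^ k = ∑ u ∈ sumLeVecs k M, (multCoeff k u : R) * ∏ r, a r ^ u r := by
  have h0 : 1 + ∑ r, a r = ∑ i, (Fin.cons 1 a : Fin (M + 1) → R) i := by simp
  rw [h0, sum_pow_eq_sum_piAntidiag]
  refine sum_nbij' Fin.tail (fun u => Fin.cons (k - ∑ r, u r) u) ?_ ?_ ?_
    (fun _ _ => Fin.tail_cons _ _) ?_
  · intro w hw
    rw [mem_piAntidiag, Fin.sum_univ_succ] at hw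
    exact mem_sumLeVecs.2 (by simp only [Fin.tail]; omega)
  · intro u hu
    rw [mem_sumLeVecs] at hu
    simp [mem_piAntidiag, Fin.sum_cons, hu]
  · intro w hw
    rw [mem_piAntidiag, Fin.sum_univ_succ] at hw
    have : k - ∑ r, Fin.tail w r = w 0 := by simp only [Fin.tail]; omega
    rw [this, Fin.cons_self_tail]
  · intro w hw
    rw [mem_piAntidiag, Fin.sum_univ_succ] at hw
    have hmc : Nat.multinomial univ w = multCoeff k (Fin.tail w) := by
      rw [Nat.multinomial, multCoeff, if_pos (by simp only [Fin.tail]; omega), ← hw.1,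
        Fin.sum_univ_succ, Fin.prod_univ_succ]
      simp [Fin.tail]
    rw [hmc, Fin.prod_univ_succ]
    simp [Fin.tail]

lemma prod_neg_one_pow_mul_pow {R : Type*} [CommRing R] {M : ℕ} (a : Fin M → R) (u : Fin M → ℕ) :
    ∏ r : Fin M, ((-1) ^ ((r : ℕ) + 1) * a r) ^ u r = (-1) ^ oddSum u * ∏ r, a r ^ u r := by
  have hsign : ∀ r : Fin M, ((-1 : R) ^ ((r : ℕ) + 1)) ^ u r =
      if Odd ((r : ℕ) + 1) then (-1) ^ u r else 1 := fun r => by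
    rcases Nat.even_or_odd ((r : ℕ) + 1) with h | h
    · simp [h.neg_one_pow, Nat.not_odd_iff_even.2 h]
    · simp [h.neg_one_pow, h]
  simp_rw [mul_pow, prod_mul_distrib, hsign, ← prod_filter, prod_pow_eq_pow_sum, oddSum]

theorem one_add_sum_pow_add_one_add_signed_sum_pow {R : Type*} [CommRing R] (k M : ℕ)
    (a : Fin M → R) :
    (1 + ∑ r, a r) ^ k + (1 + ∑ r : Fin M, (-1) ^ ((r : ℕ) + 1) * a r) ^ k
      = 2 * ∑ u ∈ evenVecs k M, (multCoeff k u : R) * ∏ r, a r ^ u r := by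
  rw [one_add_sum_pow, one_add_sum_pow, ← sum_add_distrib, evenVecs, sum_filter, mul_sum]
  refine sum_congr rfl fun u _ => ?_
  rw [prod_neg_one_pow_mul_pow, neg_one_pow_eq_ite]
  split_ifs <;> ring

lemma oddSum_snoc {M : ℕ} (v : Fin M → ℕ) (b : ℕ) :
    oddSum (Fin.snoc v b : Fin (M + 1) → ℕ) = oddSum v + if Odd (M + 1) then b else 0 := by
  simp [oddSum, sum_filter, Fin.sum_univ_castSucc]

lemma sum_filter_lt_last {M : ℕ} (u : Fin (M + 1) → ℕ) :
    ∑ r ∈ univ.filter (fun r : Fin (M + 1) => r < Fin.last M), ((r : ℕ) + 1) * u r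
      = weightSum (Fin.init u) := by
  simp [weightSum, sum_filter, Fin.sum_univ_castSucc, Fin.castSucc_lt_last, Fin.init]

lemma sum_filter_lt_castSucc {M : ℕ} (u : Fin (M + 1) → ℕ) (c : Fin M) :
    ∑ r ∈ univ.filter (fun r : Fin (M + 1) => r < c.castSucc), ((r : ℕ) + 1) * u r
      = ∑ r ∈ univ.filter (fun r : Fin M => r < c), ((r : ℕ) + 1) * Fin.init u r := by
  simp [sum_filter, Fin.sum_univ_castSucc, (Fin.castSucc_lt_last c).not_gt, Fin.init]

lemma condS3_snoc_iff {M : ℕ} (v : Fin M → ℕ) (b : ℕ) :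
    CondS3 (Fin.snoc v b : Fin (M + 1) → ℕ) ↔
      (b = 1 → M + 1 ≤ weightSum v) ∧ (b = 0 → CondS3 v) := by
  rw [CondS3, Fin.forall_fin_succ', and_comm]
  refine and_congr ?_ ?_
  · have hlast (r : Fin (M + 1)) : ¬ Fin.last M < r := (Fin.le_last r).not_gt
    simp [sum_filter_lt_last, hlast]
  · simp only [CondS3, Fin.forall_fin_succ' (P := fun r => _ < r → _), sum_filter_lt_castSucc,
      Fin.snoc_castSucc, Fin.init_snoc, Fin.snoc_last, Fin.castSucc_lt_castSucc_iff,
      Fin.castSucc_lt_last, forall_const, Fin.val_castSucc]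
    exact ⟨fun h hb c hc => h c ⟨hc.1, hc.2, hb⟩, fun h c hc => h hc.2.2 c ⟨hc.1, hc.2.1⟩⟩

lemma mem_Ufin {M : ℕ} {v : Fin M → ℕ} :
    v ∈ Ufin M ↔ weightSum v < M + 1 ∧ Even (oddSum v + (M + 1)) := by
  refine mem_filter.trans ⟨And.right, fun h => ⟨Fintype.mem_piFinset.2 fun r => ?_, h⟩⟩
  have hle : ((r : ℕ) + 1) * v r ≤ weightSum v :=
    single_le_sum (f := fun r : Fin M => ((r : ℕ) + 1) * v r) (fun _ _ => Nat.zero_le _)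
      (mem_univ r)
  exact mem_range.2 (lt_of_le_of_lt ((Nat.le_mul_of_pos_left _ r.succ_pos).trans hle) h.1)

lemma even_add_ite_odd_iff (n m : ℕ) : Even (n + if Odd m then 1 else 0) ↔ Even (n + m) := by
  rcases Nat.even_or_odd m with hm | hm
  · simp [hm, Nat.even_add, Nat.not_odd_iff_even.2 hm]
  · simp [hm, Nat.even_add, Nat.not_even_iff_odd.2 hm]

lemma snoc_mem_badVecs_iff {k M : ℕ} (v : Fin M → ℕ) (b : ℕ) :
    (Fin.snoc v b : Fin (M + 1) → ℕ) ∈ badVecs k (M + 1) ↔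
      (b = 0 ∧ v ∈ badVecs k M) ∨ (b = 1 ∧ v ∈ Ufin M ∧ ∑ r, v r + 1 ≤ k) := by
  rw [mem_badVecs, mem_badVecs, mem_Ufin, condS3_snoc_iff, oddSum_snoc, Fin.sum_snoc]
  rcases b with _ | _ | b <;> simp [even_add_ite_odd_iff, and_comm]

lemma badVecs_succ (k M : ℕ) :
    badVecs k (M + 1) =
      (badVecs k M).image (Fin.snoc · 0) ∪
        ((Ufin M).filter (fun v => ∑ r, v r + 1 ≤ k)).image (Fin.snoc · 1) := by
  ext u
  obtain ⟨v, b, rfl⟩ : ∃ v b, u = Fin.snoc v b := ⟨_, _, (Fin.snoc_init_self u).symm⟩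
  rw [snoc_mem_badVecs_iff]
  simp [Fin.snoc_inj, and_comm, eq_comm]

lemma badVecs_zero (k : ℕ) : badVecs k 0 = ∅ := by
  ext u
  simp [mem_badVecs, CondS3]

lemma multCoeff_snoc {k M : ℕ} (v : Fin M → ℕ) (b : ℕ) :
    multCoeff k (Fin.snoc v b : Fin (M + 1) → ℕ) =
      multCoeff k (Fin.cons b v : Fin (M + 1) → ℕ) := by
  rw [multCoeff, multCoeff, Fin.sum_univ_castSucc, Fin.sum_univ_succ, Fin.prod_univ_castSucc,
    Fin.prod_univ_succ]
  simp only [Fin.snoc_castSucc, Fin.snoc_last, Fin.cons_zero, Fin.cons_succ, add_comm, mul_comm]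

lemma multCoeff_cons_zero {k M : ℕ} (v : Fin M → ℕ) :
    multCoeff k (Fin.cons 0 v : Fin (M + 1) → ℕ) = multCoeff k v := by
  simp [multCoeff, Fin.prod_univ_succ]

lemma multCoeff_eq_zero_of_lt_sum {k M : ℕ} {u : Fin M → ℕ} (h : k < ∑ r, u r) :
    multCoeff k u = 0 :=
  if_neg h.not_ge

lemma prod_X_pow_snoc {M : ℕ} (v : Fin M → ℕ) (b : ℕ) :
    ∏ r : Fin (M + 1), (X (r : ℕ) : MvPolynomial ℕ ℝ) ^ (Fin.snoc v b : Fin (M + 1) → ℕ) r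
      = (∏ r : Fin M, X (r : ℕ) ^ v r) * X M ^ b := by
  simp [Fin.prod_univ_castSucc]

lemma enumPoly_badVecs_succ (k M : ℕ) :
    enumPoly k (badVecs k (M + 1)) = enumPoly k (badVecs k M) +
      X M * ∑ v ∈ Ufin M, C (multCoeff k (Fin.cons 1 v) : ℝ) * ∏ r : Fin M, X (r : ℕ) ^ v r := by
  have hdisj : Disjoint ((badVecs k M).image (Fin.snoc · 0))
      (((Ufin M).filter (fun v => ∑ r, v r + 1 ≤ k)).image
        (Fin.snoc · 1 : (Fin M → ℕ) → Fin (M + 1) → ℕ)) := by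
    simp [disjoint_left, Fin.snoc_inj]
  rw [enumPoly, badVecs_succ, sum_union hdisj, sum_image (Fin.snoc_left_injective _).injOn,
    sum_image (Fin.snoc_left_injective _).injOn, enumPoly, mul_sum, sum_filter]
  congr 1 <;> refine sum_congr rfl fun v _ => ?_
  · rw [multCoeff_snoc, multCoeff_cons_zero, prod_X_pow_snoc, pow_zero, mul_one]
  · split_ifs with hk
    · rw [multCoeff_snoc, prod_X_pow_snoc, pow_one]
      ring
    · rw [multCoeff_eq_zero_of_lt_sum (by rw [Fin.sum_cons]; omega)]
      simp

lemma Tpoly_succ (k M : ℕ) :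
    Tpoly k (M + 1) = Tpoly k M +
      X M * ∑ v ∈ Ufin M, C (multCoeff k (Fin.cons 1 v) : ℝ) * ∏ r : Fin M, X (r : ℕ) ^ v r := by
  cases M with
  | zero => simp [Tpoly, Ufin]
  | succ M => rfl

theorem enumPoly_badVecs (k M : ℕ) : enumPoly k (badVecs k M) = Tpoly k M := by
  induction M with
  | zero => simp [badVecs_zero, enumPoly, Tpoly]
  | succ M ih => rw [enumPoly_badVecs_succ, ih, Tpoly_succ]

lemma Sset_eq_filter_condS3 (k M : ℕ) : Sset k M = (evenVecs k M).filter CondS3 := by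
  ext u
  rw [Sset, mem_filter, mem_filter, evenVecs, mem_filter, sumLeVecs, mem_filter]
  simp only [oddSum, CondS3, and_assoc]

theorem enumPoly_evenVecs (k M : ℕ) : enumPoly k (evenVecs k M) = Bpoly k M + Tpoly k M := by
  rw [← enumPoly_badVecs, Bpoly, Sset_eq_filter_condS3, enumPoly, enumPoly, badVecs,
    sum_filter_add_sum_filter_not]

theorem half_mul_pow_add_pow (k M : ℕ) :
    C (1 / 2 : ℝ) *
        ((1 + ∑ r : Fin M, X (r : ℕ)) ^ k +
          (1 + ∑ r : Fin M, C ((-1 : ℝ) ^ ((r : ℕ) + 1)) * X (r : ℕ)) ^ k)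
      = enumPoly k (evenVecs k M) := by
  simp_rw [map_pow, map_neg, map_one]
  rw [one_add_sum_pow_add_one_add_signed_sum_pow, enumPoly, ← mul_assoc,
    ← map_ofNat C 2, ← map_mul, one_div_mul_cancel two_ne_zero, map_one, one_mul]
  simp_rw [← map_natCast C]

end SingleParityCheck

theorem stmt_2_general (k M : ℕ) :
    Bpoly k M =
      MvPolynomial.C (1 / 2 : ℝ) *
          ((1 + ∑ r : Fin M, MvPolynomial.X (r : ℕ)) ^ k +
            (1 + ∑ r : Fin M, MvPolynomial.C ((-1 : ℝ) ^ ((r : ℕ) + 1)) * MvPolynomial.X (r : ℕ)) ^ k)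
        - Tpoly k M := by
  rw [SingleParityCheck.half_mul_pow_add_pow, SingleParityCheck.enumPoly_evenVecs,
    add_sub_cancel_right]

/-- For `k, M ≥ 1`,
`B^{(M)}(x) = (1/2)[(P^{(M)}(x))^k + (Q^{(M)}(x))^k] - T^{(M)}(x)`
where `P^{(M)}(x) = 1 + ∑_r x_r` and `Q^{(M)}(x) = 1 + ∑_r (-1)^r x_r`. -/
theorem stmt_2 (k M : ℕ) (hk : 1 ≤ k) (hM : 1 ≤ M) :
    Bpoly k M =
      MvPolynomial.C (1 / 2 : ℝ) *
          ((1 + ∑ r : Fin M, MvPolynomial.X (r : ℕ)) ^ k +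
            (1 + ∑ r : Fin M, MvPolynomial.C ((-1 : ℝ) ^ ((r : ℕ) + 1)) * MvPolynomial.X (r : ℕ)) ^ k)
        - Tpoly k M :=
  stmt_2_general k M
end

section
/- Let k ≥ 1 and M ≥ 1 be integers and let z = (z_1, …, z_k) be a vector of integers with 0 ≤ z_i ≤ M for all i. Let u = (u_1, …, u_M) be its type, i.e., u_r = |{i : z_i = r}| for r = 1, …, M. Then z satisfies both conditions (a) Σ_{i=1}^k z_i is even, and (b) z_i ≤ Σ_{ℓ ≠ i} z_ℓ for every i ∈ {1, …, k}, if and only if u satisfies both conditions (S-2) Σ_{r odd} u_r is even, and (S-3) if there exists c ∈ {1, …, M} with u_c = 1 and u_r = 0 for all c < r ≤ M, then c ≤ Σ_{r=1}^{c−1} r·u_r. -/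
/-!
Grouping the entries of `z` by value gives `∑ zᵢ = ∑ r uᵣ`, whose parity is that of
`∑_{r odd} uᵣ`. The cone condition `zᵢ ≤ ∑_{ℓ ≠ i} z_ℓ` says `2 zᵢ ≤ ∑ z`, and only
needs checking at values `c` that occur in `z`. It holds automatically unless `c` is the largest
value and occurs only once; in that case `∑ z = c + ∑_{r < c} r uᵣ` and it becomes (S-3).
-/

open Finset

theorem sum_eq_sum_succ_mul_card_filter {ι : Type*} [Fintype ι] (M : ℕ) (z : ι → ℕ)
    (hz : ∀ i, z i ≤ M) :
    ∑ i, z i = ∑ r : Fin M, ((r : ℕ) + 1) * #{i | z i = (r : ℕ) + 1} := by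
  rw [← sum_fiberwise_of_maps_to (t := range (M + 1)) (g := z)
    (fun i _ => mem_range.2 (Nat.lt_succ_of_le (hz i))), sum_range_succ',
    ← Fin.sum_univ_eq_sum_range (fun r => ∑ i with z i = r + 1, z i),
    sum_eq_zero (s := {i | z i = 0}) fun i hi => (mem_filter.1 hi).2, add_zero]
  refine sum_congr rfl fun r _ => ?_
  rw [sum_const_nat fun i hi => (mem_filter.1 hi).2, mul_comm]

theorem even_sum_mul_iff {ι : Type*} (s : Finset ι) (f g : ι → ℕ) :
    Even (∑ i ∈ s, f i * g i) ↔ Even (∑ i ∈ s with Odd (f i), g i) := by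
  simp only [← ZMod.natCast_eq_zero_iff_even, Nat.cast_sum, Nat.cast_mul, sum_filter]
  refine Eq.congr_left (sum_congr rfl fun i _ => ?_)
  split_ifs with h
  · rw [ZMod.natCast_eq_one_iff_odd.2 h, one_mul]
  · rw [ZMod.natCast_eq_zero_iff_even.2 (Nat.not_odd_iff_even.1 h), zero_mul, Nat.cast_zero]

theorem le_sum_erase_iff {ι : Type*} [DecidableEq ι] {s : Finset ι} {i : ι} (hi : i ∈ s)
    (z : ι → ℕ) : z i ≤ ∑ j ∈ s.erase i, z j ↔ 2 * z i ≤ ∑ j ∈ s, z j := by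
  rw [← add_sum_erase s z hi]
  omega

section Order
variable {ι : Type*} [Fintype ι] [LinearOrder ι]

theorem sum_eq_add_sum_filter_lt {β : Type*} [AddCommMonoid β] {f : ι → β} {c : ι}
    (hf : ∀ r, c < r → f r = 0) : ∑ r, f r = f c + ∑ r with r < c, f r := by
  rw [← sum_filter_not_add_sum_filter univ (· < c), sum_eq_single_of_mem c (by simp)]
  intro r hr hrc
  exact hf r (lt_of_le_of_ne (not_lt.1 (mem_filter.1 hr).2) (Ne.symm hrc))

theorem two_mul_le_sum_mul {w u : ι → ℕ} (hw : Monotone w) {c : ι} (hc : 1 ≤ u c)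
    (h : ¬(u c = 1 ∧ ∀ r, c < r → u r = 0)) : 2 * w c ≤ ∑ r, w r * u r := by
  by_cases huc : u c = 1
  · push Not at h
    obtain ⟨r, hcr, hr⟩ := h huc
    calc 2 * w c ≤ w c * u c + w r * u r := by
          have := hw hcr.le
          have := Nat.le_mul_of_pos_right (w r) (Nat.pos_of_ne_zero hr)
          rw [huc]; omega
      _ ≤ ∑ r, w r * u r :=
          add_le_sum (f := fun r => w r * u r) (fun _ _ => Nat.zero_le _) (mem_univ c)
            (mem_univ r) hcr.ne
  · calc 2 * w c ≤ w c * u c := by rw [mul_comm]; exact Nat.mul_le_mul_left _ (by omega)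
      _ ≤ ∑ r, w r * u r :=
          single_le_sum (f := fun r => w r * u r) (fun _ _ => Nat.zero_le _) (mem_univ c)

theorem forall_two_mul_le_sum_mul_iff {w u : ι → ℕ} (hw : Monotone w) :
    (∀ c, 1 ≤ u c → 2 * w c ≤ ∑ r, w r * u r) ↔
      ∀ c, (u c = 1 ∧ ∀ r, c < r → u r = 0) → w c ≤ ∑ r with r < c, w r * u r := by
  constructor
  · rintro h c ⟨huc, htop⟩
    have := h c huc.ge
    rw [sum_eq_add_sum_filter_lt (f := fun r => w r * u r) fun r hr => by simp [htop r hr],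
      huc] at this
    omega
  · intro h c hc
    by_cases htop : u c = 1 ∧ ∀ r, c < r → u r = 0
    · rw [sum_eq_add_sum_filter_lt (f := fun r => w r * u r) fun r hr => by simp [htop.2 r hr],
        htop.1]
      have := h c htop
      omega
    · exact two_mul_le_sum_mul hw hc htop

end Order

theorem forall_iff_forall_card_filter_pos {ι : Type*} [Fintype ι] {M : ℕ} {z : ι → ℕ}
    (hz : ∀ i, z i ≤ M) {P : ℕ → Prop} (h0 : P 0) :
    (∀ i, P (z i)) ↔ ∀ r : Fin M, 1 ≤ #{i | z i = (r : ℕ) + 1} → P ((r : ℕ) + 1) := by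
  refine ⟨fun h r hr => ?_, fun h i => ?_⟩
  · obtain ⟨i, hi⟩ := card_pos.1 hr
    exact (mem_filter.1 hi).2 ▸ h i
  · obtain hi | hi := Nat.eq_zero_or_eq_succ_pred (z i)
    · exact hi ▸ h0
    · have hr : z i - 1 < M := by have := hz i; omega
      rw [hi]
      exact h ⟨z i - 1, hr⟩ (card_pos.2 ⟨i, mem_filter.2 ⟨mem_univ i, hi⟩⟩)

theorem stmt_3_general (k M : ℕ)
    (z : Fin k → ℕ) (hz : ∀ i, z i ≤ M)
    (u : Fin M → ℕ)
    (hu : ∀ r : Fin M, u r = (Finset.univ.filter fun i : Fin k => z i = (r : ℕ) + 1).card) :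
    (Even (∑ i, z i) ∧ ∀ i : Fin k, z i ≤ ∑ ℓ ∈ Finset.univ.erase i, z ℓ) ↔
      (Even (∑ r ∈ Finset.univ.filter (fun r : Fin M => Odd ((r : ℕ) + 1)), u r) ∧
        ∀ c : Fin M, (u c = 1 ∧ ∀ r : Fin M, c < r → u r = 0) →
          (c : ℕ) + 1 ≤ ∑ r ∈ Finset.univ.filter (fun r : Fin M => r < c), ((r : ℕ) + 1) * u r) := by
  obtain rfl : u = fun r : Fin M => #{i | z i = (r : ℕ) + 1} := funext hu
  have hw : Monotone fun r : Fin M => (r : ℕ) + 1 := fun _ _ h => Nat.succ_le_succ h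
  simp only [le_sum_erase_iff (mem_univ _), sum_eq_sum_succ_mul_card_filter M z hz]
  rw [even_sum_mul_iff, forall_iff_forall_card_filter_pos hz (P := (2 * · ≤ _)) (Nat.zero_le _),
    forall_two_mul_le_sum_mul_iff hw]

/-- Let `k, M ≥ 1` and let `z = (z_1, …, z_k)` be a vector of
integers with `0 ≤ z_i ≤ M`, with type `u` given by `u_r = |{i : z_i = r}|`.
Then (`∑ z_i` even and `z_i ≤ ∑_{ℓ ≠ i} z_ℓ` for all `i`) if and only if
(`∑_{r odd} u_r` even, and whenever `u_c = 1` with `u_r = 0` for all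
`c < r ≤ M`, one has `c ≤ ∑_{r=1}^{c-1} r u_r`). -/
theorem stmt_3 (k M : ℕ) (hk : 1 ≤ k) (hM : 1 ≤ M)
    (z : Fin k → ℕ) (hz : ∀ i, z i ≤ M)
    (u : Fin M → ℕ)
    (hu : ∀ r : Fin M, u r = (Finset.univ.filter fun i : Fin k => z i = (r : ℕ) + 1).card) :
    (Even (∑ i, z i) ∧ ∀ i : Fin k, z i ≤ ∑ ℓ ∈ Finset.univ.erase i, z ℓ) ↔
      (Even (∑ r ∈ Finset.univ.filter (fun r : Fin M => Odd ((r : ℕ) + 1)), u r) ∧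
        ∀ c : Fin M, (u c = 1 ∧ ∀ r : Fin M, c < r → u r = 0) →
          (c : ℕ) + 1 ≤ ∑ r ∈ Finset.univ.filter (fun r : Fin M => r < c), ((r : ℕ) + 1) * u r) :=
  stmt_3_general k M z hz u hu
end

section
/- Let f be a real polynomial in one variable with nonnegative coefficients having at least two nonzero coefficients. Then the function x ↦ x·f'(x)/f(x) is strictly increasing on (0, ∞); moreover its limit as x → 0⁺ equals the smallest exponent of a nonzero term of f, and its limit as x → ∞ equals the degree of f. -/
open Filter Polynomial

lemma aux_eval_eq_sum (f : Polynomial ℝ) (x : ℝ) :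
    Polynomial.eval x f = ∑ n ∈ f.support, f.coeff n * x ^ n := by
  rw [Polynomial.eval_eq_sum]; rfl

lemma aux_X_deriv (f : Polynomial ℝ) (x : ℝ) :
    x * Polynomial.eval x (Polynomial.derivative f)
      = ∑ n ∈ f.support, (n : ℝ) * f.coeff n * x ^ n := by
  rw [Polynomial.derivative_apply, Polynomial.sum, Polynomial.eval_finset_sum,
    Finset.mul_sum]
  refine Finset.sum_congr rfl fun n _ => ?_
  simp only [Polynomial.eval_mul, Polynomial.eval_C, Polynomial.eval_pow, Polynomial.eval_X]
  cases n with
  | zero => simp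
  | succ k => push_cast; rw [pow_succ]; ring

lemma aux_eval_pos (f : Polynomial ℝ) (hcoeff : ∀ n, 0 ≤ f.coeff n) (hf : f ≠ 0)
    {x : ℝ} (hx : 0 < x) : 0 < Polynomial.eval x f := by
  rw [aux_eval_eq_sum]
  obtain ⟨p, hp⟩ := Polynomial.support_nonempty.mpr hf
  refine Finset.sum_pos' (fun n _ => mul_nonneg (hcoeff n) (pow_nonneg hx.le n)) ⟨p, hp, ?_⟩
  exact mul_pos ((hcoeff p).lt_of_ne (Ne.symm (Polynomial.mem_support_iff.mp hp)))
    (pow_pos hx p)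

lemma aux_pow_lt {x y : ℝ} (hx : 0 < x) (hxy : x < y) {m n : ℕ} (h : m < n) :
    x ^ n * y ^ m < x ^ m * y ^ n := by
  have hy : 0 < y := hx.trans hxy
  have h1 : x ^ (n - m) < y ^ (n - m) :=
    pow_lt_pow_left₀ hxy hx.le (Nat.sub_ne_zero_of_lt h)
  calc x ^ n * y ^ m = x ^ m * x ^ (n - m) * y ^ m := by
        rw [← pow_add, Nat.add_sub_cancel' h.le]
    _ < x ^ m * y ^ (n - m) * y ^ m :=
        mul_lt_mul_of_pos_right (mul_lt_mul_of_pos_left h1 (pow_pos hx m)) (pow_pos hy m)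
    _ = x ^ m * y ^ n := by rw [mul_assoc, ← pow_add, Nat.sub_add_cancel h.le]

lemma aux_term_pos {a b : ℝ} (ha : 0 < a) (hb : 0 < b) {x y : ℝ} (hx : 0 < x) (hxy : x < y)
    {m n : ℕ} (hmn : m ≠ n) :
    0 < ((n : ℝ) - m) * (a * b) * (x ^ m * y ^ n - x ^ n * y ^ m) := by
  rcases hmn.lt_or_gt with h | h
  · exact mul_pos (mul_pos (sub_pos.mpr (by exact_mod_cast h)) (mul_pos ha hb))
      (sub_pos.mpr (aux_pow_lt hx hxy h))
  · have h1 : ((n : ℝ) - m) * (a * b) < 0 :=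
      mul_neg_of_neg_of_pos (sub_neg.mpr (by exact_mod_cast h)) (mul_pos ha hb)
    have h2 : x ^ m * y ^ n - x ^ n * y ^ m < 0 := sub_neg.mpr (aux_pow_lt hx hxy h)
    exact mul_pos_of_neg_of_neg h1 h2

lemma aux_term_nonneg {a b : ℝ} (ha : 0 ≤ a) (hb : 0 ≤ b) {x y : ℝ} (hx : 0 < x) (hxy : x < y)
    (m n : ℕ) :
    0 ≤ ((n : ℝ) - m) * (a * b) * (x ^ m * y ^ n - x ^ n * y ^ m) := by
  rcases eq_or_ne m n with rfl | hmn
  · simp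
  rcases ha.eq_or_lt with rfl | ha'
  · simp
  rcases hb.eq_or_lt with rfl | hb'
  · simp
  exact (aux_term_pos ha' hb' hx hxy hmn).le

/-- Let `f` be a real polynomial in one variable with nonnegative
coefficients, having at least two nonzero coefficients.  Then
`x ↦ x f'(x) / f(x)` is strictly increasing on `(0, ∞)`, tends to the smallest
exponent of a nonzero term of `f` as `x → 0⁺`, and tends to `deg f` as
`x → ∞`. -/
theorem stmt_8 (f : Polynomial ℝ) (hcoeff : ∀ n, 0 ≤ f.coeff n)
    (hsupp : 2 ≤ f.support.card) :
    StrictMonoOn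
        (fun x : ℝ => x * Polynomial.eval x (Polynomial.derivative f) / Polynomial.eval x f)
        (Set.Ioi (0 : ℝ)) ∧
      Filter.Tendsto
        (fun x : ℝ => x * Polynomial.eval x (Polynomial.derivative f) / Polynomial.eval x f)
        (nhdsWithin 0 (Set.Ioi (0 : ℝ))) (nhds (f.natTrailingDegree : ℝ)) ∧
      Filter.Tendsto
        (fun x : ℝ => x * Polynomial.eval x (Polynomial.derivative f) / Polynomial.eval x f)
        Filter.atTop (nhds (f.natDegree : ℝ)) := by
  obtain ⟨p, hp, q, hq, hpq⟩ := Finset.one_lt_card.mp hsupp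
  have hf0 : f ≠ 0 := by
    intro h; rw [h] at hsupp; simp at hsupp
  have hap : 0 < f.coeff p := (hcoeff p).lt_of_ne (Ne.symm (Polynomial.mem_support_iff.mp hp))
  have haq : 0 < f.coeff q := (hcoeff q).lt_of_ne (Ne.symm (Polynomial.mem_support_iff.mp hq))
  set S := f.support with hS
  refine ⟨?_, ?_, ?_⟩
  · -- strict monotonicity
    intro x hx y hy hxy
    have hx : (0:ℝ) < x := hx
    have hy : (0:ℝ) < y := hy
    have hfx := aux_eval_pos f hcoeff hf0 hx
    have hfy := aux_eval_pos f hcoeff hf0 hy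
    simp only
    rw [div_lt_div_iff₀ hfx hfy, aux_X_deriv, aux_X_deriv, aux_eval_eq_sum, aux_eval_eq_sum]
    rw [← sub_pos, Finset.sum_mul_sum, Finset.sum_mul_sum, ← Finset.sum_sub_distrib]
    simp_rw [← Finset.sum_sub_distrib]
    set F : ℕ → ℕ → ℝ := fun m n =>
      (m : ℝ) * f.coeff m * y ^ m * (f.coeff n * x ^ n)
        - (m : ℝ) * f.coeff m * x ^ m * (f.coeff n * y ^ n) with hF
    have hsym : ∑ m ∈ S, ∑ n ∈ S, F m n = ∑ m ∈ S, ∑ n ∈ S, F n m := Finset.sum_comm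
    have h2 : 2 * (∑ m ∈ S, ∑ n ∈ S, F m n)
        = ∑ m ∈ S, ∑ n ∈ S,
            ((n : ℝ) - m) * (f.coeff m * f.coeff n) * (x ^ m * y ^ n - x ^ n * y ^ m) := by
      rw [two_mul]
      nth_rw 2 [hsym]
      rw [← Finset.sum_add_distrib]
      refine Finset.sum_congr rfl fun m _ => ?_
      rw [← Finset.sum_add_distrib]
      refine Finset.sum_congr rfl fun n _ => ?_
      simp only [hF]; ring
    have hpos : 0 < ∑ m ∈ S, ∑ n ∈ S,
        ((n : ℝ) - m) * (f.coeff m * f.coeff n) * (x ^ m * y ^ n - x ^ n * y ^ m) := by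
      refine Finset.sum_pos' (fun m _ => Finset.sum_nonneg fun n _ =>
        aux_term_nonneg (hcoeff m) (hcoeff n) hx hxy m n) ⟨p, hp, ?_⟩
      refine Finset.sum_pos' (fun n _ => aux_term_nonneg (hcoeff p) (hcoeff n) hx hxy p n)
        ⟨q, hq, aux_term_pos hap haq hx hxy hpq⟩
    linarith
  · -- limit at 0+
    set t := f.natTrailingDegree with ht
    obtain ⟨g, hg⟩ : Polynomial.X ^ t ∣ f :=
      Polynomial.X_pow_dvd_iff.mpr fun d hd =>
        Polynomial.coeff_eq_zero_of_lt_natTrailingDegree hd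
    have hgc : ∀ n, g.coeff n = f.coeff (n + t) := fun n => by
      rw [hg, Polynomial.coeff_X_pow_mul]
    have hg0 : 0 < g.coeff 0 := by
      have h1 : g.coeff 0 = f.coeff t := by rw [hgc, zero_add]
      have h2 : f.coeff t ≠ 0 := fun h =>
        hf0 (Polynomial.trailingCoeff_eq_zero.mp (by rwa [Polynomial.trailingCoeff]))
      rw [h1]
      exact (hcoeff t).lt_of_ne (Ne.symm h2)
    have hgpos : ∀ x : ℝ, 0 ≤ x → 0 < Polynomial.eval x g := by
      intro x hx
      rw [Polynomial.eval_eq_sum_range]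
      refine Finset.sum_pos' (fun n _ => mul_nonneg (by rw [hgc]; exact hcoeff _)
        (pow_nonneg hx n)) ⟨0, Finset.mem_range.mpr (Nat.succ_pos _), by simpa using hg0⟩
    have heq : ∀ x : ℝ, 0 < x →
        x * Polynomial.eval x (Polynomial.derivative f) / Polynomial.eval x f
          = ((t : ℝ) * Polynomial.eval x g + x * Polynomial.eval x (Polynomial.derivative g))
              / Polynomial.eval x g := by
      intro x hx
      have e1 : Polynomial.eval x f = x ^ t * Polynomial.eval x g := by
        rw [hg]; simp
      have e2 : x * Polynomial.eval x (Polynomial.derivative f)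
          = x ^ t * ((t : ℝ) * Polynomial.eval x g
              + x * Polynomial.eval x (Polynomial.derivative g)) := by
        rw [hg, Polynomial.derivative_mul, Polynomial.derivative_X_pow]
        simp only [Polynomial.eval_add, Polynomial.eval_mul, Polynomial.eval_pow,
          Polynomial.eval_X, Polynomial.eval_C, Polynomial.eval_natCast]
        cases t with
        | zero => simp
        | succ k => push_cast; rw [pow_succ]; ring
      rw [e1, e2, mul_div_mul_left _ _ (pow_ne_zero t hx.ne')]
    have hcont : Filter.Tendsto
        (fun x : ℝ => ((t : ℝ) * Polynomial.eval x g
            + x * Polynomial.eval x (Polynomial.derivative g)) / Polynomial.eval x g)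
        (nhds 0) (nhds (t : ℝ)) := by
      have h0 : Polynomial.eval (0:ℝ) g ≠ 0 := (hgpos 0 le_rfl).ne'
      have hval : ((t : ℝ) * Polynomial.eval (0:ℝ) g
          + 0 * Polynomial.eval (0:ℝ) (Polynomial.derivative g)) / Polynomial.eval (0:ℝ) g
            = (t : ℝ) := by
        rw [zero_mul, add_zero, mul_div_assoc, div_self h0, mul_one]
      have hc : ContinuousAt (fun x : ℝ => ((t : ℝ) * Polynomial.eval x g
          + x * Polynomial.eval x (Polynomial.derivative g)) / Polynomial.eval x g) 0 :=
        ContinuousAt.div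
          ((continuousAt_const.mul (Polynomial.continuousAt g)).add
            (continuousAt_id.mul (Polynomial.continuousAt (Polynomial.derivative g))))
          (Polynomial.continuousAt g) h0
      simpa only [hval] using hc.tendsto
    refine (hcont.mono_left nhdsWithin_le_nhds).congr' ?_
    filter_upwards [self_mem_nhdsWithin] with x hx
    exact (heq x hx).symm
  · -- limit at ∞
    have hd1 : 1 ≤ f.natDegree := by
      by_contra h
      push_neg at h
      interval_cases hd : f.natDegree
      · have h1 := Polynomial.le_natDegree_of_mem_supp p hp
        have h2 := Polynomial.le_natDegree_of_mem_supp q hq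
        omega
    have hdpos : 0 < f.natDegree := hd1
    have hder0 : Polynomial.derivative f ≠ 0 := fun h => by
      have := Polynomial.natDegree_eq_zero_of_derivative_eq_zero h
      omega
    have hdeg : (Polynomial.X * Polynomial.derivative f).degree = f.degree := by
      rw [Polynomial.degree_mul, Polynomial.degree_X,
        Polynomial.degree_derivative_eq f hdpos, Polynomial.degree_eq_natDegree hf0]
      have : (1 : WithBot ℕ) + ((f.natDegree - 1 : ℕ) : WithBot ℕ)
          = ((1 + (f.natDegree - 1) : ℕ) : WithBot ℕ) := by push_cast; rfl
      rw [this, Nat.add_sub_cancel' hd1]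
    have hndd : (Polynomial.derivative f).natDegree = f.natDegree - 1 := by
      have := Polynomial.degree_derivative_eq f hdpos
      exact Polynomial.natDegree_eq_of_degree_eq_some this
    have hlead : (Polynomial.X * Polynomial.derivative f).leadingCoeff
        = (f.natDegree : ℝ) * f.leadingCoeff := by
      rw [Polynomial.leadingCoeff_mul, Polynomial.leadingCoeff_X, one_mul,
        Polynomial.leadingCoeff, hndd, Polynomial.coeff_derivative,
        Nat.sub_add_cancel hd1, Polynomial.leadingCoeff]
      push_cast [Nat.cast_sub hd1]
      ring
    have hL : f.leadingCoeff ≠ 0 := Polynomial.leadingCoeff_ne_zero.mpr hf0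
    have := Polynomial.div_tendsto_leadingCoeff_div_of_degree_eq
      (Polynomial.X * Polynomial.derivative f) f hdeg
    rw [hlead, mul_div_assoc, div_self hL, mul_one] at this
    refine this.congr fun x => ?_
    simp
end

section
/- Let k ≥ 2 be an integer and let d = k if k is even and d = k − 1 if k is odd. Then for every real α with 0 < α < d/k, there exists a unique positive real x_0 satisfying α·[(1 + x_0)^k + (1 − x_0)^k] = x_0·[(1 + x_0)^{k−1} − (1 − x_0)^{k−1}]. -/
/-!
Expand `(1 + x) ^ k + (1 - x) ^ k = ∑ cⱼ xʲ` with `cⱼ = (1 + (-1)ʲ) (k choose j) ≥ 0`; differentiating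
this expansion turns `k` times the equation into `∑ cⱼ (kα - j) xʲ = 0`. That polynomial is `2kα > 0`
at `0`, and its top nonzero coefficient is `c_d (kα - d) < 0`, so it has a positive root. The root is
unique because, after multiplying by `x ^ (-kα)`, the function `∑ cⱼ (kα - j) x ^ (j - kα)` has
derivative `-∑ cⱼ (kα - j)² x ^ (j - kα - 1) < 0` on `(0, ∞)`.
-/

open Finset Filter Set

noncomputable def evenChoose (k j : ℕ) : ℝ := (1 + (-1) ^ j) * k.choose j

lemma evenChoose_nonneg (k j : ℕ) : 0 ≤ evenChoose k j := by
  unfold evenChoose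
  rcases Nat.even_or_odd j with hj | hj <;> simp [hj.neg_one_pow]

lemma evenChoose_pos {k j : ℕ} (hj : Even j) (hjk : j ≤ k) : 0 < evenChoose k j := by
  unfold evenChoose
  rw [hj.neg_one_pow]
  have : (0 : ℝ) < k.choose j := by exact_mod_cast Nat.choose_pos hjk
  positivity

lemma evenChoose_of_odd (k : ℕ) {j : ℕ} (hj : Odd j) : evenChoose k j = 0 := by
  simp [evenChoose, hj.neg_one_pow]

lemma evenChoose_of_lt {k j : ℕ} (hkj : k < j) : evenChoose k j = 0 := by
  simp [evenChoose, Nat.choose_eq_zero_of_lt hkj]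

lemma one_add_pow_add_one_sub_pow (k : ℕ) (x : ℝ) :
    (1 + x) ^ k + (1 - x) ^ k = ∑ j ∈ range (k + 1), evenChoose k j * x ^ j := by
  rw [sub_eq_add_neg, add_comm 1 x, add_comm 1 (-x), add_pow, add_pow, ← sum_add_distrib]
  refine sum_congr rfl fun j _ => ?_
  rw [evenChoose, neg_pow]
  ring

lemma mul_one_add_pow_sub_one_sub_pow (k : ℕ) (x : ℝ) :
    x * (k * ((1 + x) ^ (k - 1) - (1 - x) ^ (k - 1))) =
      ∑ j ∈ range (k + 1), j * evenChoose k j * x ^ j := by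
  have hlhs : HasDerivAt (fun x : ℝ => (1 + x) ^ k + (1 - x) ^ k)
      (k * ((1 + x) ^ (k - 1) - (1 - x) ^ (k - 1))) x :=
    ((((hasDerivAt_id' x).const_add 1).fun_pow k).add
      (((hasDerivAt_id' x).const_sub 1).fun_pow k)).congr_deriv (by ring)
  have hrhs : HasDerivAt (fun x : ℝ => ∑ j ∈ range (k + 1), evenChoose k j * x ^ j)
      (∑ j ∈ range (k + 1), evenChoose k j * (j * x ^ (j - 1))) x :=
    HasDerivAt.fun_sum fun j _ => (hasDerivAt_pow j x).const_mul _
  rw [funext (one_add_pow_add_one_sub_pow k)] at hlhs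
  rw [hlhs.unique hrhs, mul_sum]
  refine sum_congr rfl fun j _ => ?_
  rcases j with _ | j
  · simp
  · rw [Nat.add_sub_cancel, pow_succ]
    ring

lemma eventually_sum_mul_pow_neg {c : ℕ → ℝ} {n m : ℕ} (hn : 0 < n) (hnm : n ≤ m)
    (hcn : c n < 0) (hc : ∀ j, n < j → c j = 0) :
    ∀ᶠ x in atTop, ∑ j ∈ range (m + 1), c j * x ^ j < 0 := by
  set Q : Polynomial ℝ := ∑ j ∈ range (m + 1), Polynomial.monomial j (c j)
  have hcoeff : ∀ i, Q.coeff i = if i ∈ range (m + 1) then c i else 0 := by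
    intro i
    simp [Q, Polynomial.finsetSum_coeff, Polynomial.coeff_monomial]
  have hdeg : Q.natDegree = n := by
    refine Polynomial.natDegree_eq_of_le_of_coeff_ne_zero ?_ ?_
    · refine Polynomial.natDegree_le_iff_coeff_eq_zero.2 fun N hN => ?_
      rw [hcoeff, hc N hN, ite_self]
    · rw [hcoeff, if_pos (mem_range.2 (by omega))]
      exact hcn.ne
  have hlead : Q.leadingCoeff = c n := by
    rw [Polynomial.leadingCoeff, hdeg, hcoeff, if_pos (mem_range.2 (by omega))]
  have htends := Q.tendsto_atBot_of_leadingCoeff_nonpos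
    (Polynomial.natDegree_pos_iff_degree_pos.1 (hdeg ▸ hn)) (hlead ▸ hcn.le)
  filter_upwards [htends.eventually (eventually_lt_atBot 0)] with x hx
  simpa [Q, Polynomial.eval_finsetSum] using hx

lemma strictAntiOn_sum_mul_sub_mul_rpow {s : Finset ℕ} {c : ℕ → ℝ} {a : ℝ}
    (hc : ∀ j ∈ s, 0 ≤ c j) (hpos : ∃ j ∈ s, 0 < c j ∧ (j : ℝ) ≠ a) :
    StrictAntiOn (fun x : ℝ => ∑ j ∈ s, c j * (a - j) * x ^ ((j : ℝ) - a)) (Ioi 0) := by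
  have hderiv : ∀ x : ℝ, 0 < x →
      HasDerivAt (fun x : ℝ => ∑ j ∈ s, c j * (a - j) * x ^ ((j : ℝ) - a))
      (-∑ j ∈ s, c j * (a - j) ^ 2 * x ^ ((j : ℝ) - a - 1)) x := by
    intro x hx
    rw [← sum_neg_distrib]
    refine HasDerivAt.fun_sum fun j _ => ?_
    exact ((Real.hasDerivAt_rpow_const (Or.inl hx.ne')).const_mul (c j * (a - j))).congr_deriv
      (by ring)
  refine strictAntiOn_of_deriv_neg (convex_Ioi 0)
    (fun x hx => (hderiv x hx).continuousAt.continuousWithinAt) fun x hx => ?_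
  rw [interior_Ioi] at hx
  rw [(hderiv x hx).deriv, neg_neg_iff_pos]
  have hpow : ∀ i : ℕ, 0 < x ^ ((i : ℝ) - a - 1) := fun i => Real.rpow_pos_of_pos hx _
  obtain ⟨j, hj, hcj, hja⟩ := hpos
  refine sum_pos' (fun i hi => by have := hc i hi; have := hpow i; positivity) ⟨j, hj, ?_⟩
  have : 0 < (a - j) ^ 2 := by have := sub_ne_zero.2 hja.symm; positivity
  have := hpow j
  positivity

lemma eq_of_sum_mul_sub_mul_pow_eq_zero {s : Finset ℕ} {c : ℕ → ℝ} {a : ℝ}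
    (hc : ∀ j ∈ s, 0 ≤ c j) (hpos : ∃ j ∈ s, 0 < c j ∧ (j : ℝ) ≠ a) {x y : ℝ}
    (hx : 0 < x) (hy : 0 < y) (hx0 : ∑ j ∈ s, c j * (a - j) * x ^ j = 0)
    (hy0 : ∑ j ∈ s, c j * (a - j) * y ^ j = 0) : x = y := by
  have hrpow : ∀ t : ℝ, 0 < t → ∑ j ∈ s, c j * (a - j) * t ^ ((j : ℝ) - a) =
      (∑ j ∈ s, c j * (a - j) * t ^ j) * t ^ (-a) := by
    intro t ht
    rw [sum_mul]
    refine sum_congr rfl fun j _ => ?_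
    rw [Real.rpow_sub ht, Real.rpow_natCast, Real.rpow_neg ht.le, div_eq_mul_inv]
    ring
  refine (strictAntiOn_sum_mul_sub_mul_rpow hc hpos).injOn hx hy ?_
  simp only [hrpow x hx, hrpow y hy, hx0, hy0, zero_mul]

lemma even_of_eq_ite {k d : ℕ} (hd : d = if Even k then k else k - 1) : Even d := by
  split_ifs at hd with hk
  · exact hd ▸ hk
  · exact hd ▸ Nat.Odd.sub_odd (Nat.not_even_iff_odd.1 hk) odd_one

lemma evenChoose_eq_zero_of_eq_ite {k d j : ℕ} (hd : d = if Even k then k else k - 1)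
    (hj : d < j) : evenChoose k j = 0 := by
  split_ifs at hd with hk
  · exact evenChoose_of_lt (hd ▸ hj)
  · rcases (show j = k ∨ k < j by omega) with rfl | hkj
    · exact evenChoose_of_odd _ (Nat.not_even_iff_odd.1 hk)
    · exact evenChoose_of_lt hkj

lemma natCast_mul_sub_eq_sum (k : ℕ) (α x : ℝ) :
    k * (α * ((1 + x) ^ k + (1 - x) ^ k) - x * ((1 + x) ^ (k - 1) - (1 - x) ^ (k - 1))) =
      ∑ j ∈ range (k + 1), evenChoose k j * (k * α - j) * x ^ j := by
  calc _ = k * α * ((1 + x) ^ k + (1 - x) ^ k)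
          - x * (k * ((1 + x) ^ (k - 1) - (1 - x) ^ (k - 1))) := by ring
    _ = _ := by
      rw [one_add_pow_add_one_sub_pow, mul_one_add_pow_sub_one_sub_pow, mul_sum,
        ← sum_sub_distrib]
      exact sum_congr rfl fun j _ => by ring

/-- Let `k ≥ 2` and `d = k` if `k` is even, `d = k - 1` if `k` is
odd.  For every real `α` with `0 < α < d/k`, there is a unique positive real
`x₀` with `α [(1+x₀)^k + (1-x₀)^k] = x₀ [(1+x₀)^{k-1} - (1-x₀)^{k-1}]`. -/
theorem stmt_9 (k : ℕ) (hk : 2 ≤ k) (d : ℕ)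
    (hd : d = if Even k then k else k - 1)
    (α : ℝ) (h0 : 0 < α) (h1 : α < (d : ℝ) / (k : ℝ)) :
    ∃! x0 : ℝ, 0 < x0 ∧
      α * ((1 + x0) ^ k + (1 - x0) ^ k) =
        x0 * ((1 + x0) ^ (k - 1) - (1 - x0) ^ (k - 1)) := by
  have hk0 : (0 : ℝ) < k := by positivity
  set Q : ℝ → ℝ := fun x => ∑ j ∈ range (k + 1), evenChoose k j * (k * α - j) * x ^ j
  have hQ : ∀ x : ℝ, α * ((1 + x) ^ k + (1 - x) ^ k) =
      x * ((1 + x) ^ (k - 1) - (1 - x) ^ (k - 1)) ↔ Q x = 0 := fun x => by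
    simp only [Q, ← natCast_mul_sub_eq_sum, mul_eq_zero, hk0.ne', false_or, sub_eq_zero]
  have hQ0 : 0 < Q 0 := by simp [Q, sum_range_succ', evenChoose, hk0, h0]
  have hdk : d ≤ k := by split_ifs at hd <;> omega
  have hd0 : 0 < d := by split_ifs at hd <;> omega
  have htop : evenChoose k d * (k * α - d) < 0 :=
    mul_neg_of_pos_of_neg (evenChoose_pos (even_of_eq_ite hd) hdk)
      (by rw [lt_div_iff₀ hk0] at h1; linarith)
  have hQ_neg : ∀ᶠ x in atTop, Q x < 0 :=
    eventually_sum_mul_pow_neg (c := fun j => evenChoose k j * (k * α - j)) hd0 hdk htop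
      fun j hj => by rw [evenChoose_eq_zero_of_eq_ite hd hj, zero_mul]
  obtain ⟨X, hQX, hX⟩ := (hQ_neg.and (eventually_gt_atTop 0)).exists
  obtain ⟨x0, ⟨hx0, -⟩, hQx0⟩ :=
    intermediate_value_Ioo' hX.le (by fun_prop : Continuous Q).continuousOn ⟨hQX, hQ0⟩
  refine ⟨x0, ⟨hx0, (hQ x0).2 hQx0⟩, fun y ⟨hy, hyeq⟩ => ?_⟩
  refine eq_of_sum_mul_sub_mul_pow_eq_zero (fun j _ => evenChoose_nonneg k j)
    ⟨0, mem_range.2 (by omega), evenChoose_pos Even.zero (Nat.zero_le k), ?_⟩ hy hx0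
    ((hQ y).1 hyeq) hQx0
  rw [Nat.cast_zero]
  exact (mul_pos hk0 h0).ne
end
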